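/- Let $g$ be a dyadic distribution on $\mathbb{R}^2$ and suppose there exist an open set $\Omega_0$ of finite measure, a contracting family $\{\Omega_i\}_{i\ge0}$ starting at $\Omega_0$, and $\lambda_i\in\mathbb{Z}\cup\{-\infty\}$ such that $\eta|\Omega_i| \le |\{S_d(g|\Omega_i) > 2^{\lambda_i-1}\}|$ whenever $\lambda_i\in\mathbb{Z}$, and every coefficient rectangle of $g$ is in $\Omega_0$ with $\Omega_{i+1}\supseteq\{$rectangles where $S_d(g|\Omega_i)>2^{\lambda_i}$ concentrates$\}$ as in the standard stopping construction. Then $\sum_{i\ge 0} 2^{r\lambda_i}|\Omega_i| \le C_{\eta,r}\, \|S_d(g)\|_{L^r(\mathbb{R}^2)}^r$ for all $0<r<\infty$. -/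

import Mathlib

/-!
Choose `m` with `2⁻¹ ^ m < η / 2` and put `E i = {S_d(g|Ω_i) > 2^{λ_i - 1}}`. Since
`|Ω_{i+m}| ≤ 2⁻¹ ^ m |Ω_i|`, the chunk `E i \ Ω_{i+m}` keeps measure at least `(η/2) |Ω_i|`, and on
it `S_d(g) ≥ S_d(g|Ω_i) > 2^{λ_i - 1}`. Chunks whose indices differ by at least `m` are disjoint,
so summing Chebyshev's inequality over each residue class mod `m` gives
`∑ 2^{rλ_i} |Ω_i| ≤ 2^{r+1} m / η · ‖S_d(g)‖_r^r`.
-/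

open MeasureTheory Set
open scoped ENNReal NNReal

noncomputable section

/-- The dyadic interval `[2^k n, 2^k (n+1))`. -/
def dyadicInterval (k n : ℤ) : Set ℝ := Set.Ico ((2 : ℝ) ^ k * n) ((2 : ℝ) ^ k * (n + 1))

/-- Index for dyadic rectangles: scales and positions in each coordinate. -/
abbrev DyadicRect := (ℤ × ℤ) × ℤ × ℤ

/-- The dyadic rectangle in the plane indexed by `R`. -/
def dyadicRect (R : DyadicRect) : Set (ℝ × ℝ) :=
  (dyadicInterval R.1.1 R.1.2) ×ˢ (dyadicInterval R.2.1 R.2.2)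

/-- The measure `|R|` of a dyadic rectangle, as an extended nonnegative real. -/
def rectVol (R : DyadicRect) : ℝ≥0∞ := (2 : ℝ≥0∞) ^ R.1.1 * (2 : ℝ≥0∞) ^ R.2.1

/-- The bi-parameter dyadic square function of a family of Haar coefficients `c`:
`S_d(c)(x) = (∑_R c_R² χ_R(x)/|R|)^{1/2}`. -/
def Sd (c : DyadicRect → ℝ) (x : ℝ × ℝ) : ℝ≥0∞ :=
  (∑' R : DyadicRect,
      (dyadicRect R).indicator (fun _ => ENNReal.ofReal (c R ^ 2) / rectVol R) x) ^ (1 / 2 : ℝ)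

/-- The average `⟨f⟩_R` of `f` over the dyadic rectangle `R`. -/
def rectAvg (f : ℝ × ℝ → ℝ) (R : DyadicRect) : ℝ :=
  (∫ y in dyadicRect R, f y) / (rectVol R).toReal

/-- The bi-parameter dyadic maximal function `M_d(f)(x) = sup_{R ∋ x} |⟨f⟩_R|`. -/
def Md (f : ℝ × ℝ → ℝ) (x : ℝ × ℝ) : ℝ≥0∞ :=
  ⨆ R : DyadicRect, (dyadicRect R).indicator (fun _ => ENNReal.ofReal |rectAvg f R|) x

end

noncomputable section
open Classical in
/-- The localized bi-parameter dyadic square function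
`S_d(g|Ω) = (∑_{R ⊆ Ω} g_R² χ_R/|R|)^{1/2}`. -/
def SdLoc (c : DyadicRect → ℝ) (Ω : Set (ℝ × ℝ)) (x : ℝ × ℝ) : ℝ≥0∞ :=
  (∑' R : DyadicRect,
      if dyadicRect R ⊆ Ω then
        (dyadicRect R).indicator (fun _ => ENNReal.ofReal (c R ^ 2) / rectVol R) x
      else 0) ^ (1 / 2 : ℝ)

/-- The weight `2^{rλ}` for `λ ∈ ℤ ∪ {-∞}`, with the convention `2^{r·(-∞)} = 0`. -/
def rThresh (r : ℝ) (l : WithBot ℤ) : ℝ≥0∞ :=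
  l.recBotCoe 0 fun k => (2 : ℝ≥0∞) ^ (r * (k : ℝ))

end

theorem le_pow_mul_of_le_mul_succ {u : ℕ → ℝ≥0∞} {c : ℝ≥0∞} (h : ∀ i, u (i + 1) ≤ c * u i)
    (i n : ℕ) : u (i + n) ≤ c ^ n * u i := by
  induction n with
  | zero => simp
  | succ n ih =>
    calc u (i + n + 1) ≤ c * u (i + n) := h _
      _ ≤ c * (c ^ n * u i) := by gcongr
      _ = c ^ (n + 1) * u i := by ring

theorem pairwise_disjoint_mul_add_of_disjoint_of_add_le {β : Type*} [PartialOrder β]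
    [OrderBot β] {F : ℕ → β} {m : ℕ} (hF : ∀ i j, i + m ≤ j → Disjoint (F i) (F j)) (c : ℕ) :
    Pairwise (Function.onFun Disjoint fun j => F (j * m + c)) := by
  have hgap : ∀ j j', j < j' → j * m + c + m ≤ j' * m + c := fun j j' h => by nlinarith
  intro j j' hne
  rcases hne.lt_or_gt with h | h
  · exact hF _ _ (hgap j j' h)
  · exact (hF _ _ (hgap j' j h)).symm

section StoppingSum

variable {α : Type*} [MeasurableSpace α] {μ : Measure α}

theorem tsum_setLIntegral_le_mul_lintegral {F : ℕ → Set α} (m : ℕ)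
    (hFm : ∀ i, MeasurableSet (F i)) (hF : ∀ i j, i + m ≤ j → Disjoint (F i) (F j))
    (f : α → ℝ≥0∞) : ∑' i, ∫⁻ x in F i, f x ∂μ ≤ m * ∫⁻ x, f x ∂μ := by
  obtain rfl | hm := eq_zero_or_neZero m
  · have hempty : ∀ i, F i = ∅ := fun i => disjoint_self.mp (hF i i le_rfl)
    simp [hempty]
  have hclass : ∀ c : ℕ, ∑' j, ∫⁻ x in F (j * m + c), f x ∂μ ≤ ∫⁻ x, f x ∂μ := fun c => by
    rw [← lintegral_iUnion (fun j => hFm _)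
      (pairwise_disjoint_mul_add_of_disjoint_of_add_le hF c)]
    exact setLIntegral_le_lintegral _ _
  calc ∑' i, ∫⁻ x in F i, f x ∂μ
      = ∑' c : Fin m, ∑' j, ∫⁻ x in F (j * m + c), f x ∂μ := by
        rw [← (Nat.divModEquiv m).symm.tsum_eq, ENNReal.tsum_prod', ENNReal.tsum_comm]
        rfl
    _ ≤ ∑' _ : Fin m, ∫⁻ x, f x ∂μ := ENNReal.tsum_le_tsum fun c => hclass c
    _ = m * ∫⁻ x, f x ∂μ := by simp

theorem mul_measure_le_measure_sdiff {s E T : Set α} {a b : ℝ≥0∞} (hs : μ s ≠ ∞)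
    (hE : a * μ s ≤ μ E) (hT : μ T ≤ b * μ s) : (a - b) * μ s ≤ μ (E \ T) :=
  calc (a - b) * μ s = a * μ s - b * μ s := ENNReal.sub_mul fun _ _ => hs
    _ ≤ μ E - μ T := tsub_le_tsub hE hT
    _ ≤ μ (E \ T) := le_measure_sdiff

theorem mul_mul_measure_le_setLIntegral_sdiff {s E T : Set α} {a b w : ℝ≥0∞} {f : α → ℝ≥0∞}
    (hE : MeasurableSet E) (hT : MeasurableSet T) (hs : μ s ≠ ∞)
    (hlarge : w ≠ 0 → a * μ s ≤ μ E) (hsmall : μ T ≤ b * μ s) (hf : ∀ x ∈ E, w ≤ f x) :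
    (a - b) * (w * μ s) ≤ ∫⁻ x in E \ T, f x ∂μ := by
  rcases eq_or_ne w 0 with rfl | hw
  · simp
  calc (a - b) * (w * μ s) = w * ((a - b) * μ s) := by ring
    _ ≤ w * μ (E \ T) := by gcongr; exact mul_measure_le_measure_sdiff hs (hlarge hw) hsmall
    _ = ∫⁻ _ in E \ T, w ∂μ := (setLIntegral_const _ _).symm
    _ ≤ ∫⁻ x in E \ T, f x ∂μ := setLIntegral_mono' (hE.diff hT) fun x hx => hf x hx.1

/-- Essential disjointness of large chunks: the chunks `E i \ Ω (i + m)` keep a fraction `a - b`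
of `Ω i` and overlap at most `m` times. -/
theorem mul_tsum_mul_measure_le_mul_lintegral {Ω E : ℕ → Set α} {w : ℕ → ℝ≥0∞}
    {f : α → ℝ≥0∞} {a b : ℝ≥0∞} (m : ℕ) (hΩ : Antitone Ω) (hΩfin : ∀ i, μ (Ω i) ≠ ∞)
    (hdecay : ∀ i, μ (Ω (i + m)) ≤ b * μ (Ω i)) (hE : ∀ i, MeasurableSet (E i))
    (hEΩ : ∀ i, E i ⊆ Ω i) (hlarge : ∀ i, w i ≠ 0 → a * μ (Ω i) ≤ μ (E i))
    (hf : ∀ i, ∀ x ∈ E i, w i ≤ f x) :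
    (a - b) * ∑' i, w i * μ (Ω i) ≤ m * ∫⁻ x, f x ∂μ := by
  set F : ℕ → Set α := fun i => E i \ toMeasurable μ (Ω (i + m))
  have hFdisj : ∀ i j, i + m ≤ j → Disjoint (F i) (F j) := fun i j hij =>
    disjoint_sdiff_left.mono_right <| sdiff_subset.trans <|
      (hEΩ j).trans <| (hΩ hij).trans (subset_toMeasurable _ _)
  calc (a - b) * ∑' i, w i * μ (Ω i) = ∑' i, (a - b) * (w i * μ (Ω i)) :=
        ENNReal.tsum_mul_left.symm
    _ ≤ ∑' i, ∫⁻ x in F i, f x ∂μ := ENNReal.tsum_le_tsum fun i =>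
        mul_mul_measure_le_setLIntegral_sdiff (hE i) (measurableSet_toMeasurable _ _)
          (hΩfin i) (hlarge i) (by rw [measure_toMeasurable]; exact hdecay i) (hf i)
    _ ≤ m * ∫⁻ x, f x ∂μ := tsum_setLIntegral_le_mul_lintegral m
        (fun i => (hE i).diff (measurableSet_toMeasurable _ _)) hFdisj f

end StoppingSum

theorem measurableSet_dyadicRect (R : DyadicRect) : MeasurableSet (dyadicRect R) :=
  measurableSet_Ico.prod measurableSet_Ico

theorem measurable_sdLoc (c : DyadicRect → ℝ) (Ω : Set (ℝ × ℝ)) : Measurable (SdLoc c Ω) := by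
  refine (Measurable.tsum fun R => ?_).pow_const _
  split_ifs
  · exact measurable_const.indicator (measurableSet_dyadicRect R)
  · exact measurable_const

theorem sdLoc_le_sd (c : DyadicRect → ℝ) (Ω : Set (ℝ × ℝ)) (x : ℝ × ℝ) :
    SdLoc c Ω x ≤ Sd c x := by
  refine ENNReal.rpow_le_rpow (ENNReal.tsum_le_tsum fun R => ?_) (by norm_num)
  split_ifs
  exacts [le_rfl, zero_le]

theorem sdLoc_eq_zero_of_notMem (c : DyadicRect → ℝ) {Ω : Set (ℝ × ℝ)} {x : ℝ × ℝ}
    (hx : x ∉ Ω) : SdLoc c Ω x = 0 := by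
  rw [SdLoc, ENNReal.tsum_eq_zero.mpr fun R => ?_, ENNReal.zero_rpow_of_pos (by norm_num)]
  split_ifs with h
  exacts [indicator_of_notMem (fun hxR => hx (h hxR)) _, rfl]

theorem setOf_lt_two_mul_sdLoc_rpow_subset {r : ℝ} (hr : 0 < r) (c : DyadicRect → ℝ)
    (Ω : Set (ℝ × ℝ)) (t : ℝ≥0∞) : {x | t < (2 * SdLoc c Ω x) ^ r} ⊆ Ω := fun x hx => by
  by_contra hxΩ
  simp [sdLoc_eq_zero_of_notMem c hxΩ, ENNReal.zero_rpow_of_pos hr] at hx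

theorem rThresh_coe_lt_two_mul_rpow {r : ℝ} (hr : 0 < r) {k : ℤ} {s : ℝ≥0∞}
    (hs : (2 : ℝ≥0∞) ^ (k - 1) < s) : rThresh r k < (2 * s) ^ r := by
  have htwo : (2 : ℝ≥0∞) ^ (k : ℝ) = 2 * 2 ^ (k - 1) := by
    rw [ENNReal.rpow_intCast, ENNReal.zpow_sub two_ne_zero ENNReal.ofNat_ne_top, zpow_one,
      mul_left_comm, ENNReal.mul_inv_cancel two_ne_zero ENNReal.ofNat_ne_top, mul_one]
  calc rThresh r k = ((2 : ℝ≥0∞) ^ (k : ℝ)) ^ r := by rw [← ENNReal.rpow_mul, mul_comm]; rfl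
    _ < (2 * s) ^ r := by
      rw [htwo]
      gcongr
      exact ENNReal.ofNat_ne_top

-- The level set `{2^{λ-1} < S_d(g|Ω_i)}` is used in the form `{2^{rλ} < (2 S_d(g|Ω_i))^r}`,
-- which still makes sense for `λ = -∞`.
theorem mul_tsum_rThresh_mul_volume_le {r : ℝ} (hr : 0 < r) {g : DyadicRect → ℝ}
    {Ω : ℕ → Set (ℝ × ℝ)} {lam : ℕ → WithBot ℤ} {a b : ℝ≥0∞} (m : ℕ) (hΩ : Antitone Ω)
    (hΩfin : ∀ i, volume (Ω i) ≠ ∞) (hdecay : ∀ i, volume (Ω (i + m)) ≤ b * volume (Ω i))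
    (hlarge : ∀ i, ∀ k : ℤ, lam i = (k : WithBot ℤ) →
      a * volume (Ω i) ≤ volume {x | (2 : ℝ≥0∞) ^ (k - 1) < SdLoc g (Ω i) x}) :
    (a - b) * ∑' i, rThresh r (lam i) * volume (Ω i) ≤ m * 2 ^ r * ∫⁻ x, Sd g x ^ r := by
  have hlevel : ∀ i, rThresh r (lam i) ≠ 0 →
      a * volume (Ω i) ≤ volume {x | rThresh r (lam i) < (2 * SdLoc g (Ω i) x) ^ r} := by
    intro i hw
    cases hl : lam i with
    | bot => exact absurd (by rw [hl]; rfl) hw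
    | coe k => exact (hlarge i k hl).trans (measure_mono fun x => rThresh_coe_lt_two_mul_rpow hr)
  calc (a - b) * ∑' i, rThresh r (lam i) * volume (Ω i)
      ≤ m * ∫⁻ x, (2 * Sd g x) ^ r :=
        mul_tsum_mul_measure_le_mul_lintegral m hΩ hΩfin hdecay
          (fun i => measurableSet_lt measurable_const
            (((measurable_sdLoc g (Ω i)).const_mul 2).pow_const r))
          (fun i => setOf_lt_two_mul_sdLoc_rpow_subset hr g (Ω i) _) hlevel
          fun i x hx => hx.le.trans <| by gcongr; exact sdLoc_le_sd g (Ω i) x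
    _ = m * 2 ^ r * ∫⁻ x, Sd g x ^ r := by
      simp_rw [ENNReal.mul_rpow_of_nonneg _ _ hr.le]
      rw [lintegral_const_mul' _ _ (ENNReal.rpow_ne_top_of_nonneg hr.le ENNReal.ofNat_ne_top),
        mul_assoc]

theorem stopping_sum_le_square_function_general (η r : ℝ) (hη0 : 0 < η) (hr : 0 < r) :
    ∃ C : ℝ≥0,
      ∀ (g : DyadicRect → ℝ) (Ω : ℕ → Set (ℝ × ℝ)) (lam : ℕ → WithBot ℤ),
        IsOpen (Ω 0) → volume (Ω 0) < ⊤ →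
        (∀ i, Ω (i + 1) ⊆ Ω i) →
        (∀ i, volume (Ω (i + 1)) ≤ volume (Ω i) / 2) →
        (∀ R, g R ≠ 0 → dyadicRect R ⊆ Ω 0) →
        (∀ i, ∀ k : ℤ, lam i = (k : WithBot ℤ) →
          ENNReal.ofReal η * volume (Ω i)
            ≤ volume {x | (2 : ℝ≥0∞) ^ (k - 1) < SdLoc g (Ω i) x}) →
        ∑' i, rThresh r (lam i) * volume (Ω i) ≤ C * ∫⁻ x, Sd g x ^ r := by
  set a := ENNReal.ofReal η
  have ha2 : a / 2 ≠ 0 := (ENNReal.half_pos (ENNReal.ofReal_pos.2 hη0).ne').ne'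
  have haTop : a ≠ ∞ := ENNReal.ofReal_ne_top
  obtain ⟨m, hm⟩ := ENNReal.exists_inv_two_pow_lt ha2
  refine ⟨(m * 2 ^ r / (a / 2)).toNNReal, ?_⟩
  intro g Ω lam _ hfin hsub hhalf _ hlarge
  have hΩ : Antitone Ω := antitone_nat_of_succ_le hsub
  have hΩfin : ∀ i, volume (Ω i) ≠ ∞ := fun i =>
    ((measure_mono (hΩ (Nat.zero_le i))).trans_lt hfin).ne
  have hdecay : ∀ i, volume (Ω (i + m)) ≤ a / 2 * volume (Ω i) := fun i =>
    (le_pow_mul_of_le_mul_succ (fun j => (hhalf j).trans_eq ENNReal.div_eq_inv_mul) i m).trans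
      (by gcongr)
  have hstop := mul_tsum_rThresh_mul_volume_le hr m hΩ hΩfin hdecay hlarge
  rw [ENNReal.sub_half haTop] at hstop
  rw [ENNReal.coe_toNNReal (ENNReal.div_ne_top (by finiteness) ha2), ← ENNReal.mul_div_right_comm]
  exact (ENNReal.le_div_iff_mul_le (Or.inl ha2)
    (Or.inl (ENNReal.div_ne_top haTop two_ne_zero))).mpr (by rwa [mul_comm])

/-- Let `g` be a dyadic distribution whose coefficient rectangles lie in an
open set `Ω 0` of finite measure, `{Ω i}` a contracting family, and `λ i ∈ ℤ ∪ {-∞}` with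
`η |Ω_i| ≤ |{S_d(g|Ω_i) > 2^{λ_i - 1}}|` whenever `λ_i ∈ ℤ`. Then for every `0 < r < ∞`,
`∑_i 2^{rλ_i} |Ω_i| ≤ C_{η,r} ‖S_d(g)‖_{L^r}^r`. -/
theorem stopping_sum_le_square_function (η r : ℝ) (hη0 : 0 < η) (hη1 : η < 1) (hr : 0 < r) :
    ∃ C : ℝ≥0,
      ∀ (g : DyadicRect → ℝ) (Ω : ℕ → Set (ℝ × ℝ)) (lam : ℕ → WithBot ℤ),
        IsOpen (Ω 0) → volume (Ω 0) < ⊤ →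
        (∀ i, Ω (i + 1) ⊆ Ω i) →
        (∀ i, volume (Ω (i + 1)) ≤ volume (Ω i) / 2) →
        (∀ R, g R ≠ 0 → dyadicRect R ⊆ Ω 0) →
        (∀ i, ∀ k : ℤ, lam i = (k : WithBot ℤ) →
          ENNReal.ofReal η * volume (Ω i)
            ≤ volume {x | (2 : ℝ≥0∞) ^ (k - 1) < SdLoc g (Ω i) x}) →
        ∑' i, rThresh r (lam i) * volume (Ω i) ≤ C * ∫⁻ x, Sd g x ^ r :=
  stopping_sum_le_square_function_general η r hη0 hr
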